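/- There exists c₂ < ∞, depending only on c₀ and ν, such that for all sufficiently large β and every integer y ≥ 0: ∑_{m=1}^∞ P_{β,0}( Z_k ≥ 0 for all 1 ≤ k ≤ m, and Z_m = y ) ≤ c₂·(y+1)/p_β. -/

import Mathlib

/-!
Reversing time turns `{Z_k ≥ 0 for 1 ≤ k ≤ m, Z_m = y}` into the event that the walk stays
`≤ y` up to time `m` and sits at `y` at time `m`. From there the next step is `≥ 1` with
probability `u = P(W_β ≥ 1)`, which takes the walk above `y`; hence
`P(max_{k ≤ m+1} Z_k ≤ y) + u · P(max_{k ≤ m} Z_k = Z_m = y) ≤ P(max_{k ≤ m} Z_k ≤ y)`,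
and telescoping in `m` bounds the sum of these probabilities by `1/u`. By symmetry
`u = p_β / 2`, so the sum is at most `2 / p_β ≤ 2 (y + 1) / p_β`.
-/

open scoped ENNReal Classical
open MeasureTheory

/-- `P_{β,0}(Z_k ≥ 0 for all 1 ≤ k ≤ m, Z_m = y)` for the random walk
`Z_k = x_1 + ⋯ + x_k` whose i.i.d. steps have law `μ`, written as a sum over the first
`m` steps `x : Fin m → ℤ`. -/
noncomputable def nonnegPathProb (μ : Measure ℤ) (m : ℕ) (y : ℤ) : ℝ≥0∞ :=
  ∑' x : Fin m → ℤ, (∏ i, μ {x i}) *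
    (if (∀ k, 1 ≤ k → k ≤ m →
          (0 : ℤ) ≤ ∑ i : Fin m, (if (i : ℕ) < k then x i else 0)) ∧
        (∑ i : Fin m, x i) = y
      then 1 else 0)

namespace MeasureTheory

variable {α ι : Type*} [MeasurableSpace α] [Fintype ι] (μ : Measure α) [SigmaFinite μ]

lemma Measure.pi_setOf_eq_tsum [Countable α] [MeasurableSingletonClass α]
    (p : (ι → α) → Prop) :
    Measure.pi (fun _ : ι => μ) {x | p x} = ∑' x, (∏ i, μ {x i}) * if p x then 1 else 0 := by
  rw [← Measure.tsum_indicator_apply_singleton _ _ (Set.to_countable _).measurableSet]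
  refine tsum_congr fun x => ?_
  rw [Set.indicator_apply, ← Set.univ_pi_singleton x, Measure.pi_pi]
  split_ifs <;> simp_all

lemma measurePreserving_snoc {m : ℕ} :
    MeasurePreserving (fun p : α × (Fin m → α) => (Fin.snoc p.2 p.1 : Fin (m + 1) → α))
      (μ.prod (Measure.pi fun _ => μ)) (Measure.pi fun _ => μ) := by
  convert (measurePreserving_piFinSuccAbove (fun _ : Fin (m + 1) => μ) (Fin.last m)).symm
  ext p : 1
  simp [MeasurableEquiv.piFinSuccAbove]

lemma measurePreserving_comp_perm (e : Equiv.Perm ι) :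
    MeasurePreserving (fun x : ι → α => x ∘ e)
      (Measure.pi fun _ => μ) (Measure.pi fun _ => μ) := by
  have hm : Measurable fun x : ι → α => x ∘ e :=
    measurable_pi_lambda _ fun i => measurable_pi_apply (e i)
  refine ⟨hm, (Measure.pi_eq fun s hs => ?_).symm⟩
  rw [Measure.map_apply hm (MeasurableSet.univ_pi hs)]
  have hpre : (fun x : ι → α => x ∘ e) ⁻¹' Set.univ.pi s =
      Set.univ.pi fun i => s (e.symm i) := by
    ext x
    simp only [Set.mem_preimage, Set.mem_univ_pi, Function.comp_apply]
    exact e.forall_congr fun i => by simp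
  rw [hpre, Measure.pi_pi]
  exact e.symm.prod_comp fun i => μ (s i)

end MeasureTheory

lemma ENNReal.tsum_le_of_add_le {T b : ℕ → ℝ≥0∞} (h : ∀ m, T (m + 1) + b m ≤ T m) :
    ∑' m, b m ≤ T 0 := by
  have key : ∀ M, T M + ∑ m ∈ Finset.range M, b m ≤ T 0 := by
    intro M
    induction M with
    | zero => simp
    | succ M ih =>
      calc T (M + 1) + ∑ m ∈ Finset.range (M + 1), b m
          = (T (M + 1) + b M) + ∑ m ∈ Finset.range M, b m := by
            rw [Finset.sum_range_succ]; ring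
        _ ≤ T 0 := (add_le_add (h M) le_rfl).trans ih
  exact ENNReal.tsum_le_of_sum_range_le fun M => le_add_self.trans (key M)

namespace IntWalk

variable {m : ℕ}

def partialSum (x : Fin m → ℤ) (k : ℕ) : ℤ :=
  ∑ i : Fin m, if (i : ℕ) < k then x i else 0

@[simp]
lemma partialSum_zero (x : Fin m → ℤ) : partialSum x 0 = 0 := by
  simp [partialSum]

lemma partialSum_of_le (x : Fin m → ℤ) {k : ℕ} (h : m ≤ k) : partialSum x k = ∑ i, x i :=
  Finset.sum_congr rfl fun i _ => if_pos (i.isLt.trans_le h)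

lemma partialSum_snoc (x : Fin m → ℤ) (z : ℤ) (k : ℕ) :
    partialSum (Fin.snoc x z : Fin (m + 1) → ℤ) k =
      partialSum x k + if m < k then z else 0 := by
  simp [partialSum, Fin.sum_univ_castSucc]

lemma partialSum_comp_rev (x : Fin m → ℤ) {k : ℕ} (hk : k ≤ m) :
    partialSum (x ∘ Fin.rev) k = partialSum x m - partialSum x (m - k) := by
  rw [partialSum_of_le x le_rfl, eq_sub_iff_add_eq, partialSum, partialSum,
    ← Equiv.sum_comp Fin.revPerm, ← Finset.sum_add_distrib]
  refine Finset.sum_congr rfl fun i _ => ?_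
  have := i.isLt
  simp only [Fin.revPerm_apply, Function.comp_apply, Fin.rev_rev, Fin.val_rev]
  split_ifs <;> omega

def stayBelow (m : ℕ) (y : ℤ) : Set (Fin m → ℤ) := {x | ∀ k ≤ m, partialSum x k ≤ y}

def endsAtMax (m : ℕ) (y : ℤ) : Set (Fin m → ℤ) :=
  {x | (∀ k ≤ m, partialSum x k ≤ y) ∧ partialSum x m = y}

lemma snoc_mem_stayBelow_succ_iff (x : Fin m → ℤ) (z y : ℤ) :
    (Fin.snoc x z : Fin (m + 1) → ℤ) ∈ stayBelow (m + 1) y ↔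
      x ∈ stayBelow m y ∧ partialSum x m + z ≤ y := by
  simp only [stayBelow, Set.mem_ofPred_eq, partialSum_snoc]
  refine ⟨fun h => ⟨fun k hk => ?_, ?_⟩, fun ⟨h, hz⟩ k hk => ?_⟩
  · simpa [not_lt.2 hk] using h k (hk.trans m.le_succ)
  · simpa [partialSum_of_le x m.le_succ, partialSum_of_le x le_rfl] using h (m + 1) le_rfl
  · rcases hk.lt_or_eq with hk | rfl
    · simpa [not_lt.2 (Nat.lt_succ_iff.1 hk)] using h k (Nat.lt_succ_iff.1 hk)
    · simpa [partialSum_of_le x m.le_succ, partialSum_of_le x le_rfl] using hz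

lemma comp_rev_mem_endsAtMax_iff {y : ℤ} (x : Fin m → ℤ) :
    x ∘ Fin.rev ∈ endsAtMax m y ↔
      (∀ k, 1 ≤ k → k ≤ m → 0 ≤ partialSum x k) ∧ ∑ i, x i = y := by
  simp only [endsAtMax, Set.mem_ofPred_eq, partialSum_comp_rev x le_rfl, Nat.sub_self,
    partialSum_zero, sub_zero, ← partialSum_of_le x le_rfl]
  refine and_congr_left fun hend => ⟨fun h k hk1 hkm => ?_, fun h k hkm => ?_⟩
  · have := h (m - k) (Nat.sub_le _ _)
    rw [partialSum_comp_rev x (Nat.sub_le _ _), Nat.sub_sub_self hkm] at this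
    omega
  · rw [partialSum_comp_rev x hkm]
    rcases Nat.eq_zero_or_pos (m - k) with h0 | hpos
    · rw [h0, partialSum_zero]; omega
    · have := h (m - k) hpos (Nat.sub_le _ _)
      omega

variable (μ : Measure ℤ)

lemma nonnegPathProb_eq_pi_endsAtMax [SigmaFinite μ] (m : ℕ) (y : ℤ) :
    nonnegPathProb μ m y = Measure.pi (fun _ : Fin m => μ) (endsAtMax m y) := by
  have hrev : (fun x => x ∘ Fin.revPerm) ⁻¹' endsAtMax m y =
      {x | (∀ k, 1 ≤ k → k ≤ m → 0 ≤ partialSum x k) ∧ ∑ i, x i = y} :=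
    Set.ext comp_rev_mem_endsAtMax_iff
  rw [← (measurePreserving_comp_perm μ Fin.revPerm).measure_preimage
    (Set.to_countable _).measurableSet.nullMeasurableSet, hrev, Measure.pi_setOf_eq_tsum,
    nonnegPathProb]
  congr!

lemma pi_stayBelow_succ_add_le [IsProbabilityMeasure μ] (m : ℕ) (y : ℤ) :
    Measure.pi (fun _ => μ) (stayBelow (m + 1) y)
        + Measure.pi (fun _ => μ) (endsAtMax m y) * μ {z | 1 ≤ z}
      ≤ Measure.pi (fun _ => μ) (stayBelow m y) := by
  set ρ := μ.prod (Measure.pi fun _ : Fin m => μ)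
  have hstay : Measure.pi (fun _ => μ) (stayBelow (m + 1) y)
      = ρ {p | p.2 ∈ stayBelow m y ∧ partialSum p.2 m + p.1 ≤ y} := by
    rw [← (measurePreserving_snoc μ).measure_preimage
      (Set.to_countable _).measurableSet.nullMeasurableSet]
    exact congrArg ρ (Set.ext fun p => snoc_mem_stayBelow_succ_iff p.2 p.1 y)
  have hexit : Measure.pi (fun _ => μ) (endsAtMax m y) * μ {z | 1 ≤ z}
      = ρ ({z | 1 ≤ z} ×ˢ endsAtMax m y) := by
    rw [Measure.prod_prod, mul_comm]
  have hprev : Measure.pi (fun _ => μ) (stayBelow m y) = ρ (Set.univ ×ˢ stayBelow m y) := by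
    rw [Measure.prod_prod, measure_univ, one_mul]
  have hdisj : Disjoint
      {p : ℤ × (Fin m → ℤ) | p.2 ∈ stayBelow m y ∧ partialSum p.2 m + p.1 ≤ y}
      ({z | 1 ≤ z} ×ˢ endsAtMax m y) :=
    Set.disjoint_left.2 fun p ⟨_, hle⟩ ⟨hz, _, hend⟩ => by
      simp only [Set.mem_ofPred_eq] at hz; omega
  rw [hstay, hexit, hprev, ← measure_union hdisj (Set.to_countable _).measurableSet]
  exact measure_mono (Set.union_subset (fun p hp => ⟨trivial, hp.1⟩)
    fun p hp => ⟨trivial, hp.2.1⟩)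

lemma tsum_pi_endsAtMax_le [IsProbabilityMeasure μ] (y : ℤ) :
    ∑' m, Measure.pi (fun _ : Fin m => μ) (endsAtMax m y) ≤ (μ {z | 1 ≤ z})⁻¹ := by
  rw [ENNReal.le_inv_iff_mul_le, ← ENNReal.tsum_mul_right]
  exact (ENNReal.tsum_le_of_add_le (pi_stayBelow_succ_add_le μ · y)).trans prob_le_one

lemma measure_ne_zero_eq_two_mul (h : Measure.map (fun z : ℤ => -z) μ = μ) :
    μ {z | z ≠ 0} = 2 * μ {z | 1 ≤ z} := by
  have hneg : μ {z : ℤ | z ≤ -1} = μ {z | 1 ≤ z} := by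
    conv_lhs => rw [← h]
    rw [Measure.map_apply measurable_neg (Set.to_countable _).measurableSet]
    congr 1
    ext z
    simp only [Set.mem_preimage, Set.mem_ofPred_eq]
    omega
  have hsplit : {z : ℤ | z ≠ 0} = {z | 1 ≤ z} ∪ {z | z ≤ -1} := by
    ext z
    simp only [Set.mem_ofPred_eq, Set.mem_union]
    omega
  rw [hsplit, measure_union _ (Set.to_countable _).measurableSet, hneg, two_mul]
  exact Set.disjoint_left.2 fun z h1 h2 => by simp only [Set.mem_ofPred_eq] at h1 h2; omega

end IntWalk

lemma ENNReal.inv_le_ofReal_two_mul_div {u : ℝ≥0∞} (hu : u ≠ 0) (hut : u ≠ ⊤) {c : ℝ}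
    (hc : 1 ≤ c) : u⁻¹ ≤ ENNReal.ofReal (2 * c / (2 * u).toReal) := by
  have hq : 2 * u ≠ 0 := mul_ne_zero two_ne_zero hu
  have hqt : 2 * u ≠ ⊤ := ENNReal.mul_ne_top ENNReal.ofNat_ne_top hut
  rw [ENNReal.ofReal_div_of_pos (ENNReal.toReal_pos hq hqt), ENNReal.ofReal_toReal hqt,
    ← one_div, ← ENNReal.mul_div_mul_left 1 u two_ne_zero ENNReal.ofNat_ne_top, mul_one,
    ← ENNReal.ofReal_ofNat 2]
  gcongr
  linarith

open IntWalk in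
theorem nonneg_walk_sum_bound_general (c₀ : ℝ) (hc₀ : 1 ≤ c₀)
    (μW : ℝ → Measure ℤ) (hprob : ∀ β, IsProbabilityMeasure (μW β))
    (hsymm : ∀ β, Measure.map (fun z : ℤ => -z) (μW β) = μW β)
    (hplo : ∀ β : ℝ, 0 < β →
      c₀⁻¹ * Real.exp (-β) ≤ ((μW β) {z : ℤ | z ≠ 0}).toReal) :
    ∃ c₂ : ℝ, ∃ β₀ : ℝ, ∀ β : ℝ, β₀ ≤ β → ∀ y : ℕ,
      ∑' m : ℕ, nonnegPathProb (μW β) (m + 1) (y : ℤ)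
        ≤ ENNReal.ofReal (c₂ * ((y : ℝ) + 1) / ((μW β) {z : ℤ | z ≠ 0}).toReal) := by
  refine ⟨2, 1, fun β hβ y => ?_⟩
  have := hprob β
  have hc₀_pos : 0 < c₀ := by linarith
  have hp : 0 < ((μW β) {z : ℤ | z ≠ 0}).toReal :=
    (by positivity : 0 < c₀⁻¹ * Real.exp (-β)).trans_le (hplo β (by linarith))
  rw [measure_ne_zero_eq_two_mul _ (hsymm β)] at hp ⊢
  have hu : μW β {z | 1 ≤ z} ≠ 0 := fun h => by simp [h] at hp
  calc ∑' m : ℕ, nonnegPathProb (μW β) (m + 1) (y : ℤ)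
      = ∑' m : ℕ, Measure.pi (fun _ => μW β) (endsAtMax (m + 1) (y : ℤ)) := by
        simp only [nonnegPathProb_eq_pi_endsAtMax]
    _ ≤ ∑' m : ℕ, Measure.pi (fun _ => μW β) (endsAtMax m (y : ℤ)) :=
        ENNReal.tsum_comp_le_tsum_of_injective (add_left_injective 1)
          fun m => Measure.pi (fun _ : Fin m => μW β) (endsAtMax m (y : ℤ))
    _ ≤ (μW β {z | 1 ≤ z})⁻¹ := tsum_pi_endsAtMax_le _ _
    _ ≤ _ := ENNReal.inv_le_ofReal_two_mul_div hu (measure_ne_top _ _) (by simp)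

/-- there is `c₂ < ∞`, depending only on `c₀` and `ν`, such that for all
sufficiently large `β` and every integer `y ≥ 0`,
`∑_{m ≥ 1} P_{β,0}(Z_k ≥ 0 for all 1 ≤ k ≤ m, Z_m = y) ≤ c₂·(y+1)/p_β`. -/
theorem nonneg_walk_sum_bound (c₀ ν : ℝ) (hc₀ : 1 ≤ c₀) (hν : 0 < ν)
    (μW : ℝ → Measure ℤ) (hprob : ∀ β, IsProbabilityMeasure (μW β))
    (hsymm : ∀ β, Measure.map (fun z : ℤ => -z) (μW β) = μW β)
    (hplo : ∀ β : ℝ, 0 < β →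
      c₀⁻¹ * Real.exp (-β) ≤ ((μW β) {z : ℤ | z ≠ 0}).toReal)
    (hphi : ∀ β : ℝ, 0 < β →
      ((μW β) {z : ℤ | z ≠ 0}).toReal ≤ c₀ * Real.exp (-β))
    (htail : ∀ β : ℝ, 0 < β → ∀ z : ℤ, 2 ≤ |z| →
      ((μW β) {z}).toReal ≤
        ((μW β) {x : ℤ | x ≠ 0}).toReal * Real.exp (-ν * β * (|z| : ℤ))) :
    ∃ c₂ : ℝ, ∃ β₀ : ℝ, ∀ β : ℝ, β₀ ≤ β → ∀ y : ℕ,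
      ∑' m : ℕ, nonnegPathProb (μW β) (m + 1) (y : ℤ)
        ≤ ENNReal.ofReal (c₂ * ((y : ℝ) + 1) / ((μW β) {z : ℤ | z ≠ 0}).toReal) :=
  nonneg_walk_sum_bound_general c₀ hc₀ μW hprob hsymm hplo
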